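/- For all real numbers β and m with 0 < β < m, the function h : ℝ → ℝ defined by h(t) = sinh(βt/2)/sinh(mt/2) for t ≠ 0 and h(0) = β/m belongs to the Schwartz class 𝒮(ℝ); that is, h is infinitely differentiable on ℝ and for all natural numbers k and n the function t ↦ t^k · h^{(n)}(t) is bounded on ℝ. -/

import Mathlib

open Real Filter Set Topology
open scoped ContDiff

private lemma abs_sinh_le_exp (x : ℝ) : |Real.sinh x| ≤ Real.exp |x| := by
  rw [Real.abs_sinh, Real.sinh_eq]
  have h1 := Real.exp_pos (-|x|)
  have h2 := Real.exp_pos |x|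
  linarith

private lemma abs_cosh_le_exp (x : ℝ) : |Real.cosh x| ≤ Real.exp |x| := by
  rw [abs_of_pos (Real.cosh_pos x), Real.cosh_eq]
  have h1 := Real.exp_le_exp.mpr (le_abs_self x)
  have h2 := Real.exp_le_exp.mpr (neg_le_abs x)
  linarith

private lemma iter_sinh_cosh (j : ℕ) :
    (iteratedDeriv j Real.sinh = Real.sinh ∧ iteratedDeriv j Real.cosh = Real.cosh) ∨
    (iteratedDeriv j Real.sinh = Real.cosh ∧ iteratedDeriv j Real.cosh = Real.sinh) := by
  induction j with
  | zero => left; simp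
  | succ n ih =>
    rcases ih with ⟨h1, h2⟩ | ⟨h1, h2⟩
    · right
      rw [iteratedDeriv_succ, iteratedDeriv_succ, h1, h2, Real.deriv_sinh, Real.deriv_cosh]
      exact ⟨rfl, rfl⟩
    · left
      rw [iteratedDeriv_succ, iteratedDeriv_succ, h1, h2, Real.deriv_sinh, Real.deriv_cosh]
      exact ⟨rfl, rfl⟩

private lemma sinh_iter_bound (c : ℝ) (hc : 0 ≤ c) (j : ℕ) (t : ℝ) :
    |iteratedDeriv j (fun s => Real.sinh (c * s)) t| ≤ c ^ j * Real.exp (c * |t|) := by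
  have h := congrFun (iteratedDeriv_comp_const_mul (Real.contDiff_sinh (n := j)) c) t
  rw [h, abs_mul, abs_pow, abs_of_nonneg hc]
  have hct : |c * t| = c * |t| := by rw [abs_mul, abs_of_nonneg hc]
  have hb : |iteratedDeriv j Real.sinh (c * t)| ≤ Real.exp (c * |t|) := by
    rcases iter_sinh_cosh j with ⟨h1, _⟩ | ⟨h1, _⟩ <;> rw [h1]
    · exact hct ▸ abs_sinh_le_exp (c * t)
    · exact hct ▸ abs_cosh_le_exp (c * t)
  exact mul_le_mul_of_nonneg_left hb (pow_nonneg hc j)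

private lemma cosh_iter_bound (c : ℝ) (hc : 0 ≤ c) (j : ℕ) (t : ℝ) :
    |iteratedDeriv j (fun s => Real.cosh (c * s)) t| ≤ c ^ j * Real.exp (c * |t|) := by
  have h := congrFun (iteratedDeriv_comp_const_mul (Real.contDiff_cosh (n := j)) c) t
  rw [h, abs_mul, abs_pow, abs_of_nonneg hc]
  have hct : |c * t| = c * |t| := by rw [abs_mul, abs_of_nonneg hc]
  have hb : |iteratedDeriv j Real.cosh (c * t)| ≤ Real.exp (c * |t|) := by
    rcases iter_sinh_cosh j with ⟨_, h1⟩ | ⟨_, h1⟩ <;> rw [h1]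
    · exact hct ▸ abs_cosh_le_exp (c * t)
    · exact hct ▸ abs_sinh_le_exp (c * t)
  exact mul_le_mul_of_nonneg_left hb (pow_nonneg hc j)
private def ExpB (w : ℝ) (f : ℝ → ℝ) : Prop :=
  ∀ j : ℕ, ∃ C : ℝ, ∀ t : ℝ, |iteratedDeriv j f t| ≤ C * Real.exp (w * |t|)

private lemma ExpB.nonneg_choice {w : ℝ} {f : ℝ → ℝ} {C : ℝ}
    (h : ∀ t : ℝ, |iteratedDeriv 0 f t| ≤ C * Real.exp (w * |t|)) : True := trivial

private lemma expB_mul {w v : ℝ} {f g : ℝ → ℝ} (hf : ContDiff ℝ ∞ f) (hg : ContDiff ℝ ∞ g)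
    (Hf : ExpB w f) (Hg : ExpB v g) : ExpB (w + v) (fun t => f t * g t) := by
  intro j
  choose Cf hCf using Hf
  choose Cg hCg using Hg
  have hCf0 : ∀ i, 0 ≤ Cf i := by
    intro i
    have := hCf i 0
    simp only [abs_zero, mul_zero, Real.exp_zero, mul_one] at this
    exact le_trans (abs_nonneg _) this
  have hCg0 : ∀ i, 0 ≤ Cg i := by
    intro i
    have := hCg i 0
    simp only [abs_zero, mul_zero, Real.exp_zero, mul_one] at this
    exact le_trans (abs_nonneg _) this
  refine ⟨∑ i ∈ Finset.range (j + 1), (j.choose i : ℝ) * Cf i * Cg (j - i), fun t => ?_⟩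
  have hnorm : |iteratedDeriv j (fun t => f t * g t) t|
      = ‖iteratedFDeriv ℝ j (fun t => f t * g t) t‖ := by
    rw [norm_iteratedFDeriv_eq_norm_iteratedDeriv, Real.norm_eq_abs]
  have hle : ‖iteratedFDeriv ℝ j (fun t => f t * g t) t‖ ≤
      ∑ i ∈ Finset.range (j + 1), (j.choose i : ℝ) * ‖iteratedFDeriv ℝ i f t‖ *
        ‖iteratedFDeriv ℝ (j - i) g t‖ :=
    norm_iteratedFDeriv_mul_le hf hg t (by exact_mod_cast le_top)
  rw [hnorm]
  refine hle.trans ?_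
  have hterm : ∀ i ∈ Finset.range (j + 1),
      (j.choose i : ℝ) * ‖iteratedFDeriv ℝ i f t‖ * ‖iteratedFDeriv ℝ (j - i) g t‖ ≤
      ((j.choose i : ℝ) * Cf i * Cg (j - i)) * Real.exp ((w + v) * |t|) := by
    intro i _
    have h1 : ‖iteratedFDeriv ℝ i f t‖ ≤ Cf i * Real.exp (w * |t|) := by
      rw [norm_iteratedFDeriv_eq_norm_iteratedDeriv, Real.norm_eq_abs]; exact hCf i t
    have h2 : ‖iteratedFDeriv ℝ (j - i) g t‖ ≤ Cg (j - i) * Real.exp (v * |t|) := by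
      rw [norm_iteratedFDeriv_eq_norm_iteratedDeriv, Real.norm_eq_abs]; exact hCg (j - i) t
    have := mul_le_mul (mul_le_mul_of_nonneg_left h1 (by positivity : (0:ℝ) ≤ (j.choose i : ℝ)))
      h2 (norm_nonneg _) (mul_nonneg (by positivity) (mul_nonneg (hCf0 i) (Real.exp_pos _).le))
    calc (j.choose i : ℝ) * ‖iteratedFDeriv ℝ i f t‖ * ‖iteratedFDeriv ℝ (j - i) g t‖
        ≤ (j.choose i : ℝ) * (Cf i * Real.exp (w * |t|)) * (Cg (j - i) * Real.exp (v * |t|)) :=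
          this
      _ = ((j.choose i : ℝ) * Cf i * Cg (j - i)) * Real.exp ((w + v) * |t|) := by
          rw [add_mul, Real.exp_add]; ring
  refine (Finset.sum_le_sum hterm).trans_eq ?_
  rw [← Finset.sum_mul]

private lemma expB_deriv {w : ℝ} {f : ℝ → ℝ} (H : ExpB w f) : ExpB w (deriv f) := by
  intro j
  obtain ⟨C, hC⟩ := H (j + 1)
  exact ⟨C, fun t => by rw [← iteratedDeriv_succ']; exact hC t⟩

private lemma expB_const_mul {w : ℝ} {f : ℝ → ℝ} (hf : ContDiff ℝ ∞ f) (c : ℝ)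
    (H : ExpB w f) : ExpB w (fun t => c * f t) := by
  intro j
  obtain ⟨C, hC⟩ := H j
  refine ⟨|c| * C, fun t => ?_⟩
  have heq : iteratedDeriv j (fun z => c * f z) t = c * iteratedDeriv j f t := by
    simp_rw [← iteratedDerivWithin_univ]
    exact iteratedDerivWithin_const_mul (Set.mem_univ t) uniqueDiffOn_univ c
      ((contDiff_infty.mp hf) j).contDiffWithinAt
  rw [heq, abs_mul, mul_assoc]
  exact mul_le_mul_of_nonneg_left (hC t) (abs_nonneg c)

private lemma expB_sub {w : ℝ} {f g : ℝ → ℝ} (hf : ContDiff ℝ ∞ f) (hg : ContDiff ℝ ∞ g)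
    (Hf : ExpB w f) (Hg : ExpB w g) : ExpB w (fun t => f t - g t) := by
  intro j
  obtain ⟨C, hC⟩ := Hf j
  obtain ⟨D, hD⟩ := Hg j
  refine ⟨C + D, fun t => ?_⟩
  have heq : iteratedDeriv j (fun z => f z - g z) t
      = iteratedDeriv j f t - iteratedDeriv j g t := by
    simp_rw [← iteratedDerivWithin_univ]
    exact iteratedDerivWithin_sub (Set.mem_univ t) uniqueDiffOn_univ
      ((contDiff_infty.mp hf) j).contDiffWithinAt
      ((contDiff_infty.mp hg) j).contDiffWithinAt
  rw [heq, add_mul]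
  exact (abs_sub _ _).trans (add_le_add (hC t) (hD t))

/-- The function `t ↦ sinh(βt/2)/sinh(mt/2)` (with value `β/m` at `0`) belongs to the
Schwartz class for `0 < β < m`: it is smooth and all products `t^k h^{(n)}(t)` are bounded. -/
theorem sinh_quotient_schwartz (β m : ℝ) (hβ : 0 < β) (hβm : β < m)
    (h : ℝ → ℝ)
    (hh : ∀ t : ℝ, h t = if t = 0 then β / m else Real.sinh (β * t / 2) / Real.sinh (m * t / 2)) :
    ContDiff ℝ (⊤ : ℕ∞) h ∧ ∀ k n : ℕ, ∃ C : ℝ, ∀ t : ℝ, |t ^ k * iteratedDeriv n h t| ≤ C := by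
  have hm : 0 < m := hβ.trans hβm
  set a := β / 2 with ha_def
  set b := m / 2 with hb_def
  have ha : 0 < a := by positivity
  have hb : 0 < b := by positivity
  have hab : a < b := by rw [ha_def, hb_def]; linarith
  have hne : ∀ t : ℝ, t ≠ 0 → h t = Real.sinh (a * t) / Real.sinh (b * t) := by
    intro t ht
    rw [hh t, if_neg ht]
    have h1 : β * t / 2 = a * t := by rw [ha_def]; ring
    have h2 : m * t / 2 = b * t := by rw [hb_def]; ring
    rw [h1, h2]
  have hasD : ∀ (c t : ℝ), HasDerivAt (fun s : ℝ => Real.sinh (c * s)) (c * Real.cosh (c * t)) t := by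
    intro c t
    have := ((hasDerivAt_id t).const_mul c).sinh
    convert this using 1
    show c * Real.cosh (c * t) = Real.cosh (c * t) * (c * 1); ring
    rfl
  have hsa : ContDiff ℝ ω (fun t : ℝ => Real.sinh (a * t)) :=
    Real.contDiff_sinh.comp (contDiff_const.mul contDiff_id)
  have hsb : ContDiff ℝ ω (fun t : ℝ => Real.sinh (b * t)) :=
    Real.contDiff_sinh.comp (contDiff_const.mul contDiff_id)
  have hcb : ContDiff ℝ ω (fun t : ℝ => Real.cosh (b * t)) :=
    Real.contDiff_cosh.comp (contDiff_const.mul contDiff_id)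
  set ga := dslope (fun t : ℝ => Real.sinh (a * t)) 0 with hga_def
  set gb := dslope (fun t : ℝ => Real.sinh (b * t)) 0 with hgb_def
  have hgane : ∀ t : ℝ, t ≠ 0 → ga t = Real.sinh (a * t) / t := by
    intro t ht
    rw [hga_def, dslope_of_ne _ ht, slope_def_field]
    simp
  have hgbne : ∀ t : ℝ, t ≠ 0 → gb t = Real.sinh (b * t) / t := by
    intro t ht
    rw [hgb_def, dslope_of_ne _ ht, slope_def_field]
    simp
  have hga0 : ga 0 = a := by
    rw [hga_def, dslope_same, (hasD a 0).deriv]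
    simp
  have hgb0 : gb 0 = b := by
    rw [hgb_def, dslope_same, (hasD b 0).deriv]
    simp
  have hga_an : ∀ x : ℝ, AnalyticAt ℝ ga x := by
    intro x
    rcases eq_or_ne x 0 with rfl | hx
    · obtain ⟨p, hp⟩ := hsa.analyticOnNhd (s := Set.univ) 0 (Set.mem_univ 0)
      exact hp.has_fpower_series_dslope_fslope.analyticAt
    · have h1 : AnalyticAt ℝ (fun t : ℝ => Real.sinh (a * t) / t) x :=
        (hsa.analyticOnNhd x (Set.mem_univ x)).div analyticAt_id hx
      refine h1.congr ?_
      filter_upwards [isOpen_compl_singleton.mem_nhds hx] with s hs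
      exact (hgane s hs).symm
  have hgb_an : ∀ x : ℝ, AnalyticAt ℝ gb x := by
    intro x
    rcases eq_or_ne x 0 with rfl | hx
    · obtain ⟨p, hp⟩ := hsb.analyticOnNhd (s := Set.univ) 0 (Set.mem_univ 0)
      exact hp.has_fpower_series_dslope_fslope.analyticAt
    · have h1 : AnalyticAt ℝ (fun t : ℝ => Real.sinh (b * t) / t) x :=
        (hsb.analyticOnNhd x (Set.mem_univ x)).div analyticAt_id hx
      refine h1.congr ?_
      filter_upwards [isOpen_compl_singleton.mem_nhds hx] with s hs
      exact (hgbne s hs).symm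
  have hgb_pos : ∀ t : ℝ, 0 < gb t := by
    intro t
    rcases eq_or_ne t 0 with rfl | ht
    · rw [hgb0]; exact hb
    · rw [hgbne t ht]
      rcases ht.lt_or_gt with hlt | hlt
      · apply div_pos_iff.mpr
        right
        constructor
        · rw [← Real.sinh_zero]
          exact Real.sinh_lt_sinh.mpr (by nlinarith)
        · exact hlt
      · apply div_pos_iff.mpr
        left
        constructor
        · rw [← Real.sinh_zero]
          exact Real.sinh_lt_sinh.mpr (by nlinarith)
        · exact hlt
  have hEq : h = fun t => ga t / gb t := by
    funext t
    rcases eq_or_ne t 0 with rfl | ht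
    · rw [hh 0, if_pos rfl, hga0, hgb0, ha_def, hb_def, div_div_div_comm,
        div_self (two_ne_zero), div_one]
    · rw [hne t ht, hgane t ht, hgbne t ht, div_div_div_comm, div_self ht, div_one]
  have hsmooth : ContDiff ℝ (⊤ : ℕ∞) h := by
    rw [hEq]
    exact AnalyticOnNhd.contDiff (fun x _ => (hga_an x).div (hgb_an x) (hgb_pos x).ne')
  refine ⟨hsmooth, ?_⟩
  -- the quantitative part
  have hsb_ne : ∀ t : ℝ, t ≠ 0 → Real.sinh (b * t) ≠ 0 := by
    intro t ht hzero
    have : b * t = 0 := Real.sinh_injective (by rw [hzero, Real.sinh_zero])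
    rcases mul_eq_zero.mp this with h' | h'
    · exact hb.ne' h'
    · exact ht h'
  have Hsinh : ExpB b (fun t : ℝ => Real.sinh (b * t)) :=
    fun j => ⟨b ^ j, fun t => sinh_iter_bound b hb.le j t⟩
  have Hcosh : ExpB b (fun t : ℝ => Real.cosh (b * t)) :=
    fun j => ⟨b ^ j, fun t => cosh_iter_bound b hb.le j t⟩
  have main : ∀ n : ℕ, ∃ F : ℝ → ℝ, ContDiff ℝ ∞ F ∧
      (∀ t : ℝ, t ≠ 0 → iteratedDeriv n h t = F t / (Real.sinh (b * t)) ^ (n + 1)) ∧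
      ExpB (a + n * b) F := by
    intro n
    induction n with
    | zero =>
      refine ⟨fun t => Real.sinh (a * t), hsa.of_le le_top, ?_, ?_⟩
      · intro t ht
        rw [iteratedDeriv_zero, hne t ht, pow_one]
      · simp only [Nat.cast_zero, zero_mul, add_zero]
        exact fun j => ⟨a ^ j, fun t => sinh_iter_bound a ha.le j t⟩
    | succ n ih =>
      obtain ⟨F, hF, hFeq, hFb⟩ := ih
      have hFd : ContDiff ℝ ∞ (deriv F) := (contDiff_infty_iff_deriv.mp hF).2
      have hs1 : ContDiff ℝ ∞ (fun t => deriv F t * Real.sinh (b * t)) :=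
        hFd.mul (hsb.of_le le_top)
      have hs2 : ContDiff ℝ ∞ (fun t => F t * Real.cosh (b * t)) :=
        hF.mul (hcb.of_le le_top)
      refine ⟨fun t => deriv F t * Real.sinh (b * t)
          - ((n + 1 : ℝ) * b) * (F t * Real.cosh (b * t)), ?_, ?_, ?_⟩
      · exact hs1.sub (contDiff_const.mul hs2)
      · intro t ht
        have hsbt := hsb_ne t ht
        have hev : iteratedDeriv n h =ᶠ[nhds t]
            fun s => F s / Real.sinh (b * s) ^ (n + 1) := by
          filter_upwards [isOpen_compl_singleton.mem_nhds ht] with s hs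
          exact hFeq s hs
        rw [iteratedDeriv_succ, hev.deriv_eq]
        have h1 : HasDerivAt F (deriv F t) t :=
          ((hF.differentiable (by simp)) t).hasDerivAt
        have h3 : HasDerivAt (fun s : ℝ => Real.sinh (b * s) ^ (n + 1))
            (((n : ℝ) + 1) * Real.sinh (b * t) ^ n * (b * Real.cosh (b * t))) t := by
          simpa [Pi.pow_def] using (hasD b t).pow (n + 1)
        have h4 := h1.fun_div h3 (pow_ne_zero _ hsbt)
        rw [h4.deriv]
        field_simp
        ring
      · have hw : a + ((n + 1 : ℕ) : ℝ) * b = (a + (n : ℝ) * b) + b := by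
          push_cast; ring
        rw [hw]
        have E1 : ExpB ((a + (n : ℝ) * b) + b) (fun t => deriv F t * Real.sinh (b * t)) :=
          expB_mul hFd (hsb.of_le le_top) (expB_deriv hFb) Hsinh
        have E2 : ExpB ((a + (n : ℝ) * b) + b) (fun t => F t * Real.cosh (b * t)) :=
          expB_mul hF (hcb.of_le le_top) hFb Hcosh
        have E2' : ExpB ((a + (n : ℝ) * b) + b)
            (fun t => ((n + 1 : ℝ) * b) * (F t * Real.cosh (b * t))) :=
          expB_const_mul hs2 _ E2
        exact expB_sub hs1 (contDiff_const.mul hs2) E1 E2'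
  intro k n
  obtain ⟨F, hF, hFeq, hFb⟩ := main n
  obtain ⟨C0, hC0⟩ := hFb 0
  have hC00 : 0 ≤ C0 := by
    have := hC0 0
    simp only [abs_zero, mul_zero, Real.exp_zero, mul_one] at this
    exact le_trans (abs_nonneg _) this
  -- bound on [-1, 1] by compactness
  have hith : ContDiff ℝ ∞ (deriv^[n] h) := ContDiff.iterate_deriv n (hsmooth.of_le (by simp))
  have hcont : Continuous (fun t : ℝ => t ^ k * iteratedDeriv n h t) := by
    rw [iteratedDeriv_eq_iterate]
    exact (continuous_pow k).mul hith.continuous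
  obtain ⟨M, hM⟩ := isCompact_Icc.exists_bound_of_continuousOn
    (s := Set.Icc (-1 : ℝ) 1) hcont.continuousOn
  -- bound outside [-1, 1]
  set δ := b - a with hδ_def
  have hδ : 0 < δ := sub_pos.mpr hab
  set c0 := (1 - Real.exp (-(2 * b))) / 2 with hc0_def
  have hc0 : 0 < c0 := by
    have : Real.exp (-(2 * b)) < 1 := Real.exp_lt_one_iff.mpr (by linarith)
    rw [hc0_def]; linarith
  set C2 := (k.factorial : ℝ) * C0 / (δ ^ k * c0 ^ (n + 1)) with hC2_def
  refine ⟨max M C2, fun t => ?_⟩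
  rcases le_total |t| 1 with hsmall | hbig
  · have ht : t ∈ Set.Icc (-1 : ℝ) 1 := abs_le.mp hsmall
    have hMt := hM t ht
    rw [Real.norm_eq_abs] at hMt
    exact le_trans hMt (le_max_left _ _)
  · -- |t| ≥ 1, in particular t ≠ 0
    have ht0 : t ≠ 0 := by
      intro h0
      rw [h0, abs_zero] at hbig
      linarith
    have habs0 : (0:ℝ) < |Real.sinh (b * t)| := abs_pos.mpr (hsb_ne t ht0)
    -- lower bound for |sinh(b t)|
    have hsinh_lb : c0 * Real.exp (b * |t|) ≤ |Real.sinh (b * t)| := by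
      rw [Real.abs_sinh, abs_mul, abs_of_pos hb, Real.sinh_eq]
      have e1 : Real.exp (-(b * |t|)) ≤ Real.exp (b * |t|) * Real.exp (-(2 * b)) := by
        rw [← Real.exp_add]
        apply Real.exp_le_exp.mpr
        nlinarith
      have e2 := Real.exp_pos (b * |t|)
      rw [hc0_def]
      nlinarith
    -- upper bound for |t|^k
    have hpow : |t| ^ k ≤ (k.factorial : ℝ) / δ ^ k * Real.exp (δ * |t|) := by
      have h1 : (δ * |t|) ^ k / (k.factorial : ℝ) ≤ Real.exp (δ * |t|) :=
        Real.pow_div_factorial_le_exp _ (by positivity) k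
      rw [mul_pow] at h1
      have hkf : (0:ℝ) < (k.factorial : ℝ) := by exact_mod_cast k.factorial_pos
      rw [div_le_iff₀ hkf] at h1
      rw [div_mul_eq_mul_div, le_div_iff₀ (by positivity : (0:ℝ) < δ ^ k)]
      calc |t| ^ k * δ ^ k = δ ^ k * |t| ^ k := by ring
        _ ≤ Real.exp (δ * |t|) * (k.factorial : ℝ) := h1
        _ = (k.factorial : ℝ) * Real.exp (δ * |t|) := by ring
    -- main chain
    have hF0 := hC0 t
    rw [iteratedDeriv_zero] at hF0
    have key : |t| ^ k * |F t| ≤ C2 * |Real.sinh (b * t)| ^ (n + 1) := by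
      have lhs_le : |t| ^ k * |F t| ≤
          ((k.factorial : ℝ) * C0 / δ ^ k) * Real.exp (((n : ℝ) + 1) * b * |t|) := by
        calc |t| ^ k * |F t|
            ≤ ((k.factorial : ℝ) / δ ^ k * Real.exp (δ * |t|)) * (C0 * Real.exp ((a + n * b) * |t|)) :=
              mul_le_mul hpow hF0 (abs_nonneg _) (by positivity)
          _ = ((k.factorial : ℝ) * C0 / δ ^ k) * Real.exp (δ * |t| + (a + n * b) * |t|) := by
              rw [Real.exp_add]; ring
          _ = ((k.factorial : ℝ) * C0 / δ ^ k) * Real.exp (((n : ℝ) + 1) * b * |t|) := by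
              congr 1
              rw [hδ_def]
              ring_nf
      have rhs_ge : ((k.factorial : ℝ) * C0 / δ ^ k) * Real.exp (((n : ℝ) + 1) * b * |t|) ≤
          C2 * |Real.sinh (b * t)| ^ (n + 1) := by
        have h1 : (c0 * Real.exp (b * |t|)) ^ (n + 1) ≤ |Real.sinh (b * t)| ^ (n + 1) :=
          pow_le_pow_left₀ (by positivity) hsinh_lb (n + 1)
        have h2 : C2 * (c0 * Real.exp (b * |t|)) ^ (n + 1) ≤ C2 * |Real.sinh (b * t)| ^ (n + 1) := by
          apply mul_le_mul_of_nonneg_left h1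
          rw [hC2_def]; positivity
        refine le_trans (le_of_eq ?_) h2
        have hexp : ((n : ℝ) + 1) * b * |t| = ((n + 1 : ℕ) : ℝ) * (b * |t|) := by
          push_cast; ring
        rw [mul_pow, hexp, Real.exp_nat_mul, hC2_def]
        field_simp
      exact lhs_le.trans rhs_ge
    have habs : |t ^ k * iteratedDeriv n h t| = |t| ^ k * |F t| / |Real.sinh (b * t)| ^ (n + 1) := by
      rw [hFeq t ht0, abs_mul, abs_pow, abs_div, abs_pow, mul_div_assoc]
    rw [habs]
    refine le_trans ?_ (le_max_right M C2)
    rw [div_le_iff₀ (by positivity)]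
    exact key
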